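/- arXiv:2202.03982 — 3 statements merged into one kernel-verified Lean document; each statement's English description precedes it below -/
import Mathlib

section
/- Let q ≥ 2 and d ≥ 3 be integers with (q,d) ≠ (2,6). Then there exists a prime ℓ such that the multiplicative order of q modulo ℓ equals d. (Zsygmondy/Birkhoff–Vandiver theorem.) -/
/-!
Let `Φ = Φ_d(q)`. If a prime `ℓ` divides `Φ`, then `q` is a primitive root of unity of order
`ordCompl[ℓ] d` in `ZMod ℓ`; so either some prime divisor `ℓ ∤ d` of `Φ` has order exactly `d`,
or every prime divisor `ℓ` of `Φ` divides `d` and all other prime factors of `d` divide `ℓ - 1`.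
In the latter case `Φ` has a single prime divisor `p` (the largest prime factor of `d`), and
`p² ∤ Φ` because `Φ` divides `(Q^p - 1)/(Q - 1)` with `Q = q^(d/p) ≡ 1 [mod p]` (lifting the
exponent), so `Φ = p`. The estimates `(x - 1)^φ(n) < Φ_n(x) ≤ (x + 1)^φ(n)` rule this out, except
for `Φ_6(2) = 3`.
-/

open Polynomial Finset

theorem Nat.ordCompl_self_mul {p : ℕ} (hp : p.Prime) (n : ℕ) :
    ordCompl[p] (p * n) = ordCompl[p] n := by
  simpa using Nat.ordCompl_self_pow_mul n 1 hp

section PrimeDivisors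

variable {ℓ n : ℕ} {q : ℤ}

theorem isPrimitiveRoot_ordCompl_of_dvd_cyclotomic_eval [Fact ℓ.Prime] (hn : n ≠ 0)
    (h : (ℓ : ℤ) ∣ (cyclotomic n ℤ).eval q) : IsPrimitiveRoot (q : ZMod ℓ) (ordCompl[ℓ] n) := by
  have : NeZero ((ordCompl[ℓ] n : ℕ) : ZMod ℓ) :=
    ⟨(ZMod.natCast_eq_zero_iff _ _).not.mpr (Nat.not_dvd_ordCompl Fact.out hn)⟩
  have hroot : (cyclotomic n (ZMod ℓ)).IsRoot (q : ZMod ℓ) := by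
    rw [IsRoot, ← eq_intCast (Int.castRingHom _), cyclotomic.eval_apply, eq_intCast,
      ZMod.intCast_zmod_eq_zero_iff_dvd]
    exact h
  rw [← Nat.ordProj_mul_ordCompl_eq_self n ℓ] at hroot
  exact isRoot_cyclotomic_prime_pow_mul_iff_of_charP.mp hroot

theorem orderOf_eq_of_dvd_cyclotomic_eval (hℓ : ℓ.Prime) (hℓn : ¬ℓ ∣ n)
    (h : (ℓ : ℤ) ∣ (cyclotomic n ℤ).eval q) : orderOf (q : ZMod ℓ) = n := by
  have := Fact.mk hℓ
  have hn : n ≠ 0 := by rintro rfl; simp at hℓn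
  rw [← (isPrimitiveRoot_ordCompl_of_dvd_cyclotomic_eval hn h).eq_orderOf,
    (Nat.ordCompl_eq_self_iff_zero_or_not_dvd n hℓ).mpr (.inr hℓn)]

theorem ordCompl_dvd_sub_one_of_dvd_cyclotomic_eval (hℓ : ℓ.Prime) (hn : n ≠ 0)
    (h : (ℓ : ℤ) ∣ (cyclotomic n ℤ).eval q) : ordCompl[ℓ] n ∣ ℓ - 1 := by
  have := Fact.mk hℓ
  have hζ := isPrimitiveRoot_ordCompl_of_dvd_cyclotomic_eval hn h
  rw [hζ.eq_orderOf]
  exact ZMod.orderOf_dvd_card_sub_one (hζ.ne_zero (Nat.ordCompl_pos ℓ hn).ne')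

theorem lt_of_dvd_of_dvd_cyclotomic_eval {s : ℕ} (hℓ : ℓ.Prime) (hs : s.Prime) (hn : n ≠ 0)
    (hsn : s ∣ n) (hsℓ : s ≠ ℓ) (h : (ℓ : ℤ) ∣ (cyclotomic n ℤ).eval q) : s < ℓ := by
  have hs_ordCompl : s ∣ ordCompl[ℓ] n := by
    rw [← Nat.ordProj_mul_ordCompl_eq_self n ℓ] at hsn
    exact (((Nat.coprime_primes hs hℓ).mpr hsℓ).pow_right _).dvd_of_dvd_mul_left hsn
  have := Nat.le_of_dvd (by have := hℓ.two_le; omega)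
    (hs_ordCompl.trans (ordCompl_dvd_sub_one_of_dvd_cyclotomic_eval hℓ hn h))
  omega

theorem eq_of_dvd_of_dvd_cyclotomic_eval {p : ℕ} (hp : p.Prime) (hℓ : ℓ.Prime) (hn : n ≠ 0)
    (hpn : p ∣ n) (hℓn : ℓ ∣ n) (hpΦ : (p : ℤ) ∣ (cyclotomic n ℤ).eval q)
    (hℓΦ : (ℓ : ℤ) ∣ (cyclotomic n ℤ).eval q) : p = ℓ := by
  by_contra hne
  exact lt_asymm (lt_of_dvd_of_dvd_cyclotomic_eval hℓ hp hn hpn hne hℓΦ)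
    (lt_of_dvd_of_dvd_cyclotomic_eval hp hℓ hn hℓn (Ne.symm hne) hpΦ)

end PrimeDivisors

theorem cyclotomic_eval_dvd_geom_sum {R : Type*} [CommRing R] [IsDomain R] {c p : ℕ} {x : R}
    (hc : c ≠ 0) (hp : 1 < p) (hx : x ^ c ≠ 1) :
    (cyclotomic (c * p) R).eval x ∣ ∑ i ∈ range p, (x ^ c) ^ i := by
  have hmem : c ∈ (c * p).properDivisors :=
    Nat.mem_properDivisors.mpr ⟨dvd_mul_right c p, lt_mul_right (Nat.pos_of_ne_zero hc) hp⟩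
  have := eval_dvd (x := x) (X_pow_sub_one_mul_cyclotomic_dvd_X_pow_sub_one_of_dvd R hmem)
  simp only [eval_mul, eval_sub, eval_pow, eval_X, eval_one] at this
  rw [pow_mul, ← geom_sum_mul (x ^ c) p, mul_comm (∑ i ∈ range p, _)] at this
  exact (mul_dvd_mul_iff_left (sub_ne_zero.mpr hx)).mp this

theorem not_sq_dvd_geom_sum {p : ℕ} {Q : ℤ} (hp : p.Prime) (hQ : (p : ℤ) ∣ Q - 1)
    (h2 : p = 2 → 4 ∣ Q - 1) : ¬(p : ℤ) ^ 2 ∣ ∑ i ∈ range p, Q ^ i := by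
  rcases hp.eq_two_or_odd' with rfl | hodd
  · have := h2 rfl
    norm_num [sum_range_succ]
    omega
  · have hpZ : Prime (p : ℤ) := Nat.prime_iff_prime_int.mp hp
    have hpQ : ¬(p : ℤ) ∣ Q := fun hQ' => hpZ.not_dvd_one (by simpa using dvd_sub hQ' hQ)
    have := emultiplicity_geom_sum₂_eq_one (y := 1) hpZ hodd (by simpa using hQ) hpQ
    simp only [one_pow, mul_one] at this
    rw [pow_dvd_iff_le_emultiplicity, this]
    norm_num

theorem not_sq_dvd_cyclotomic_eval {p n : ℕ} {q : ℤ} (hp : p.Prime) (hq : 1 < q) (hpn : p ∣ n)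
    (hn : n ≠ 2) (h : (p : ℤ) ∣ (cyclotomic n ℤ).eval q) :
    ¬(p : ℤ) ^ 2 ∣ (cyclotomic n ℤ).eval q := by
  have := Fact.mk hp
  obtain ⟨c, rfl⟩ := hpn
  have hc : c ≠ 0 := by rintro rfl; simp [Int.natCast_dvd, hp.ne_one] at h
  have hζ := isPrimitiveRoot_ordCompl_of_dvd_cyclotomic_eval (mul_ne_zero hp.ne_zero hc) h
  have hpow : ∀ e, ordCompl[p] c ∣ e → (p : ℤ) ∣ q ^ e - 1 := fun e he => by
    rw [← ZMod.intCast_zmod_eq_zero_iff_dvd, Int.cast_sub, Int.cast_pow, Int.cast_one,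
      (hζ.pow_eq_one_iff_dvd e).mpr (Nat.ordCompl_self_mul hp c ▸ he), sub_self]
  -- For `p = 2` the order of `q` is `1`, so `n` is a power of `2` and `q ^ c` is an odd square.
  have h2 : p = 2 → 4 ∣ q ^ c - 1 := by
    rintro rfl
    have hone : ordCompl[2] c = 1 := by
      simpa [Nat.ordCompl_self_mul hp] using
        ordCompl_dvd_sub_one_of_dvd_cyclotomic_eval hp (by omega) h
    obtain ⟨e, rfl⟩ : 2 ∣ c := by
      by_contra h2c
      rw [(Nat.ordCompl_eq_self_iff_zero_or_not_dvd c hp).mpr (.inr h2c)] at hone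
      omega
    obtain ⟨t, ht⟩ := hpow e (by simp [hone])
    exact ⟨t ^ 2 + t, by rw [pow_mul', sub_eq_iff_eq_add.mp ht]; ring⟩
  refine fun hsq => not_sq_dvd_geom_sum hp (hpow c (Nat.ordCompl_dvd c p)) h2 (hsq.trans ?_)
  rw [mul_comm]
  exact cyclotomic_eval_dvd_geom_sum hc hp.one_lt (one_lt_pow₀ hq hc).ne'

theorem cyclotomic_eval_eq_prime {p n : ℕ} {q : ℤ} (hp : p.Prime) (hq : 1 < q) (hn : n ≠ 0)
    (hn2 : n ≠ 2) (hpΦ : (p : ℤ) ∣ (cyclotomic n ℤ).eval q)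
    (hdvd : ∀ ℓ : ℕ, ℓ.Prime → (ℓ : ℤ) ∣ (cyclotomic n ℤ).eval q → ℓ ∣ n) :
    (cyclotomic n ℤ).eval q = p := by
  set Φ := (cyclotomic n ℤ).eval q
  have hΦpos : 0 < Φ := cyclotomic_pos' n hq
  have hpow : Φ.natAbs = p ^ Φ.natAbs.primeFactorsList.length :=
    Nat.eq_prime_pow_of_unique_prime_dvd (by omega) fun hℓ hℓΦ =>
      eq_of_dvd_of_dvd_cyclotomic_eval hℓ hp hn (hdvd _ hℓ (Int.natCast_dvd.mpr hℓΦ))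
        (hdvd p hp hpΦ) (Int.natCast_dvd.mpr hℓΦ) hpΦ
  set k := Φ.natAbs.primeFactorsList.length
  have hk0 : k ≠ 0 := by
    rintro hk
    rw [hk, pow_zero] at hpow
    exact hp.ne_one (Nat.dvd_one.mp (hpow ▸ Int.natCast_dvd.mp hpΦ))
  have hk2 : k < 2 := by
    by_contra! hk
    refine not_sq_dvd_cyclotomic_eval hp hq (hdvd p hp hpΦ) hn2 hpΦ ?_
    rw [← Int.natCast_pow, Int.natCast_dvd, hpow]
    exact pow_dvd_pow p hk
  rw [← Int.natAbs_of_nonneg hΦpos.le, hpow, show k = 1 by omega, pow_one]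

theorem exists_prime_dvd_cyclotomic_eval {n q : ℕ} (hn : 1 < n) (hq : 2 ≤ q) :
    ∃ p : ℕ, p.Prime ∧ (p : ℤ) ∣ (cyclotomic n ℤ).eval (q : ℤ) := by
  have := sub_one_lt_natAbs_cyclotomic_eval hn (q := q) (by omega)
  obtain ⟨p, hp, hpΦ⟩ := Nat.exists_prime_and_dvd (n := ((cyclotomic n ℤ).eval (q : ℤ)).natAbs)
    (by omega)
  exact ⟨p, hp, Int.natCast_dvd.mpr hpΦ⟩

theorem mul_add_one_lt_pow {p q : ℕ} (hp : 3 ≤ p) (hq : 2 ≤ q) (h : ¬(p = 3 ∧ q = 2)) :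
    p * (q + 1) < q ^ p := by
  induction p, hp using Nat.le_induction with
  | base =>
    have hq3 : 3 ≤ q := by omega
    nlinarith [pow_succ q 2]
  | succ n hn ih =>
    by_cases hn3 : n = 3 ∧ q = 2
    · obtain ⟨rfl, rfl⟩ := hn3
      norm_num
    · have := ih hn3
      rw [pow_succ]
      nlinarith [Nat.mul_le_mul_left (q ^ n) hq]

section Size

variable {p q : ℕ}

theorem prime_lt_cyclotomic_eval_prime {x : ℝ} (hp : p.Prime) (hx : 1 < x) :
    (p : ℝ) < (cyclotomic p ℝ).eval x := by
  have := Fact.mk hp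
  rw [cyclotomic_prime, eval_geom_sum]
  calc (p : ℝ) = ∑ _i ∈ range p, (1 : ℝ) := by simp
    _ < ∑ i ∈ range p, x ^ i :=
      sum_lt_sum (fun i _ => one_le_pow₀ hx.le) ⟨1, mem_range.mpr hp.one_lt, by simpa using hx⟩

theorem prime_lt_cyclotomic_eval_mul_of_dvd {c : ℕ} (hp : p.Prime) (hq : 2 ≤ q) (hc : c ≠ 0)
    (hpc : p ∣ c) : (p : ℝ) < (cyclotomic (c * p) ℝ).eval (q : ℝ) := by
  rw [← cyclotomic_expand_eq_cyclotomic hp hpc, expand_eval]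
  have hqp : (p : ℝ) + 1 ≤ (q : ℝ) ^ p := by exact_mod_cast Nat.lt_pow_self (n := p) hq
  have hp2 : (2 : ℝ) ≤ p := by exact_mod_cast hp.two_le
  calc (p : ℝ) ≤ (q : ℝ) ^ p - 1 := by linarith
    _ ≤ ((q : ℝ) ^ p - 1) ^ c.totient :=
      le_self_pow₀ (by linarith) (Nat.totient_pos.mpr (Nat.pos_of_ne_zero hc)).ne'
    _ < _ := sub_one_pow_totient_lt_cyclotomic_eval
      ((Nat.le_of_dvd (Nat.pos_of_ne_zero hc) hpc).trans' hp.two_le) (by linarith)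

theorem prime_lt_cyclotomic_eval_mul_of_dvd_sub_one {m : ℕ} (hp : p.Prime) (hq : 2 ≤ q)
    (hm : 2 ≤ m) (hmp : m ∣ p - 1) (h : ¬(q = 2 ∧ m * p = 6)) :
    (p : ℝ) < (cyclotomic (m * p) ℝ).eval (q : ℝ) := by
  have hmp' : m ≤ p - 1 := Nat.le_of_dvd (by have := hp.two_le; omega) hmp
  have hpm : ¬p ∣ m := fun hpm => by have := Nat.le_of_dvd (by omega) hpm; omega
  have hkey : p * (q + 1) < q ^ p := by
    refine mul_add_one_lt_pow (by omega) hq fun ⟨hp3, hq2⟩ => h ⟨hq2, ?_⟩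
    subst hp3
    have : m = 2 := by have := Nat.le_of_dvd (by norm_num) hmp; omega
    subst this
    rfl
  have hkey' : (p : ℝ) * (q + 1) + 1 ≤ (q : ℝ) ^ p := by exact_mod_cast Nat.succ_le_of_lt hkey
  have hq1 : (1 : ℝ) < q := by exact_mod_cast hq
  have hexpand : (cyclotomic m ℝ).eval ((q : ℝ) ^ p) =
      (cyclotomic (m * p) ℝ).eval (q : ℝ) * (cyclotomic m ℝ).eval (q : ℝ) := by
    rw [← expand_eval, cyclotomic_expand_eq_cyclotomic_mul hp hpm, eval_mul]
  set t := m.totient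
  have ht : t ≠ 0 := (Nat.totient_pos.mpr (by omega)).ne'
  by_contra! hle
  have hp1 : (1 : ℝ) ≤ p := by exact_mod_cast hp.one_lt.le
  have hupper := cyclotomic_eval_le_add_one_pow_totient hq1 m
  have hlower := sub_one_pow_totient_lt_cyclotomic_eval hm (one_lt_pow₀ hq1 hp.ne_zero)
  have : (p : ℝ) * (q + 1) ^ t < p * (q + 1) ^ t :=
    calc (p : ℝ) * (q + 1) ^ t ≤ p ^ t * (q + 1) ^ t := by gcongr; exact le_self_pow₀ hp1 ht
      _ = (p * (q + 1)) ^ t := (mul_pow _ _ _).symm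
      _ ≤ ((q : ℝ) ^ p - 1) ^ t := by gcongr; linarith
      _ < (cyclotomic m ℝ).eval ((q : ℝ) ^ p) := hlower
      _ ≤ p * (q + 1) ^ t := by
        rw [hexpand]
        exact mul_le_mul hle hupper (cyclotomic_nonneg m hq1.le) (by positivity)
  exact this.false

theorem prime_lt_cyclotomic_eval {d : ℕ} (hp : p.Prime) (hq : 2 ≤ q) (hd : d ≠ 0) (hpd : p ∣ d)
    (hord : ordCompl[p] d ∣ p - 1) (h : ¬(q = 2 ∧ d = 6)) :
    (p : ℝ) < (cyclotomic d ℝ).eval (q : ℝ) := by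
  obtain ⟨c, rfl⟩ := hpd
  have hc : c ≠ 0 := right_ne_zero_of_mul hd
  rw [mul_comm] at h ⊢
  by_cases hpc : p ∣ c
  · exact prime_lt_cyclotomic_eval_mul_of_dvd hp hq hc hpc
  rw [Nat.ordCompl_self_mul hp, (Nat.ordCompl_eq_self_iff_zero_or_not_dvd c hp).mpr (.inr hpc)]
    at hord
  rcases (by omega : c = 1 ∨ 2 ≤ c) with rfl | hc2
  · simpa using prime_lt_cyclotomic_eval_prime hp (by exact_mod_cast hq : (1 : ℝ) < q)
  · exact prime_lt_cyclotomic_eval_mul_of_dvd_sub_one hp hq hc2 hord h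

end Size

/-- **Birkhoff–Vandiver / Zsygmondy**: for `q ≥ 2` and `d ≥ 3` with `(q,d) ≠ (2,6)`,
there is a prime `ℓ` such that the multiplicative order of `q` modulo `ℓ` equals `d`. -/
theorem order_exists_of_ne_two_six (q d : ℕ) (hq : 2 ≤ q) (hd : 3 ≤ d)
    (h : ¬(q = 2 ∧ d = 6)) :
    ∃ ℓ : ℕ, ℓ.Prime ∧ orderOf (q : ZMod ℓ) = d := by
  by_contra! hno
  have hd0 : d ≠ 0 := by omega
  have hdvd : ∀ ℓ : ℕ, ℓ.Prime → (ℓ : ℤ) ∣ (cyclotomic d ℤ).eval (q : ℤ) → ℓ ∣ d :=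
    fun ℓ hℓ hℓΦ => by_contra fun hℓd =>
      hno ℓ hℓ (by simpa using orderOf_eq_of_dvd_cyclotomic_eval hℓ hℓd hℓΦ)
  obtain ⟨p, hp, hpΦ⟩ := exists_prime_dvd_cyclotomic_eval (by omega : 1 < d) hq
  have hΦ := cyclotomic_eval_eq_prime hp (by exact_mod_cast hq) hd0 (by omega) hpΦ hdvd
  have hlt := prime_lt_cyclotomic_eval hp hq hd0 (hdvd p hp hpΦ)
    (ordCompl_dvd_sub_one_of_dvd_cyclotomic_eval hp hd0 hpΦ) h
  have hΦℝ : (cyclotomic d ℝ).eval (q : ℝ) = p := by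
    simpa [hΦ] using cyclotomic.eval_apply (q : ℤ) d (Int.castRingHom ℝ)
  exact hlt.ne' hΦℝ
end

section
/- Let Σ = {S, T} be a Lusztig symbol with S, T finite subsets of ℕ, and define φ(Σ) = {S_e ∪ T_o, T_e ∪ S_o} where subscripts e, o denote even and odd elements. Then φ is an involution on symbols that preserves the rank, and the defects of Σ and φ(Σ) have the same parity; moreover, if the defect of Σ is even, then defect(φ(Σ)) − defect(Σ) ≡ 0 or 2 (mod 4), determined by the parity of rank(Σ). -/
/-!
Splitting `S` and `T` into even and odd parts, `φ` swaps the odd parts `S_o` and `T_o`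
between the two rows, so applying it twice restores `{S, T}`, and it leaves the total sum
and the total number of entries (hence the rank) unchanged. With `a, b, c, d` the sizes of
`S_e, S_o, T_e, T_o`, the two defects are `|a + b - c - d|` and `|a + d - c - b|`, whose
arguments differ by `2 (d - b)`. When they are even, `|x| ≡ x (mod 4)`, so the difference
of the defects is `2 (d - b) (mod 4)`, while the rank is `≡ b + d (mod 2)`: every entry
contributes its parity and the term `⌊(n - 1) / 2⌋ ⌊n / 2⌋` is even for even `n`.
-/

/-- The even part of a finite set of naturals. -/
def symEven (S : Finset ℕ) : Finset ℕ := S.filter (fun x => x % 2 = 0)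

/-- The odd part of a finite set of naturals. -/
def symOdd (S : Finset ℕ) : Finset ℕ := S.filter (fun x => x % 2 = 1)

/-- First member of the symbol `φ({S,T}) = {S_e ∪ T_o, T_e ∪ S_o}`. -/
def phiFst (S T : Finset ℕ) : Finset ℕ := symEven S ∪ symOdd T

/-- Second member of the symbol `φ({S,T}) = {S_e ∪ T_o, T_e ∪ S_o}`. -/
def phiSnd (S T : Finset ℕ) : Finset ℕ := symEven T ∪ symOdd S

/-- The defect `||S| − |T||` of a symbol `{S,T}`. -/
def symDefect (S T : Finset ℕ) : ℤ := |(S.card : ℤ) - (T.card : ℤ)|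

/-- The rank `Σ_{x∈S} x + Σ_{y∈T} y + ⌊((|S|+|T|−1)/2)²⌋` of a symbol `{S,T}`. -/
def symRank (S T : Finset ℕ) : ℕ :=
  ∑ x ∈ S, x + ∑ y ∈ T, y + ((S.card + T.card - 1) / 2) * ((S.card + T.card) / 2)

open Finset

theorem Int.abs_emod_four_of_even {x : ℤ} (hx : Even x) : |x| % 4 = x % 4 := by
  obtain ⟨k, rfl⟩ := hx
  rcases abs_cases (k + k) with ⟨h, -⟩ | ⟨h, -⟩ <;> omega

theorem Nat.even_sub_one_div_two_mul_div_two {n : ℕ} (hn : Even n) :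
    Even ((n - 1) / 2 * (n / 2)) := by
  obtain ⟨m, rfl⟩ := hn
  rcases m with _ | k
  · simp
  · have h₁ : (k + 1 + (k + 1) - 1) / 2 = k := by omega
    have h₂ : (k + 1 + (k + 1)) / 2 = k + 1 := by omega
    rw [h₁, h₂]
    exact Nat.even_mul_succ_self k

section EvenOddParts

variable (S T : Finset ℕ)

theorem symEven_union_symOdd : symEven S ∪ symOdd S = S := by
  ext x
  simp only [symEven, symOdd, mem_union, mem_filter]
  grind

theorem disjoint_symEven_symOdd : Disjoint (symEven S) (symOdd T) := by
  simp only [disjoint_left, symEven, symOdd, mem_filter]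
  omega

theorem sum_symEven_add_sum_symOdd {M : Type*} [AddCommMonoid M] (f : ℕ → M) :
    ∑ x ∈ symEven S, f x + ∑ x ∈ symOdd S, f x = ∑ x ∈ S, f x := by
  rw [← sum_union (disjoint_symEven_symOdd S S), symEven_union_symOdd]

theorem card_symEven_add_card_symOdd : #(symEven S) + #(symOdd S) = #S := by
  simpa only [card_eq_sum_ones] using sum_symEven_add_sum_symOdd S (fun _ => 1)

theorem sum_mod_two_eq_card_symOdd_mod_two : (∑ x ∈ S, x) % 2 = #(symOdd S) % 2 := by
  rw [sum_nat_mod, symOdd, card_filter]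
  exact congrArg (· % 2) (sum_congr rfl fun x _ => by split_ifs <;> omega)

theorem symEven_phiFst : symEven (phiFst S T) = symEven S := by
  ext x
  simp only [phiFst, symEven, symOdd, mem_union, mem_filter]
  grind

theorem symOdd_phiFst : symOdd (phiFst S T) = symOdd T := by
  ext x
  simp only [phiFst, symEven, symOdd, mem_union, mem_filter]
  grind

theorem phiSnd_eq_phiFst : phiSnd S T = phiFst T S := rfl

theorem phiFst_phiFst_phiSnd : phiFst (phiFst S T) (phiSnd S T) = S := by
  rw [phiFst, symEven_phiFst, phiSnd_eq_phiFst, symOdd_phiFst, symEven_union_symOdd]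

theorem phiSnd_phiFst_phiSnd : phiSnd (phiFst S T) (phiSnd S T) = T :=
  phiFst_phiFst_phiSnd T S

theorem card_phiFst : #(phiFst S T) = #(symEven S) + #(symOdd T) :=
  card_union_of_disjoint (disjoint_symEven_symOdd S T)

theorem card_phiSnd : #(phiSnd S T) = #(symEven T) + #(symOdd S) :=
  card_phiFst T S

theorem sum_phiFst_add_sum_phiSnd {M : Type*} [AddCommMonoid M] (f : ℕ → M) :
    ∑ x ∈ phiFst S T, f x + ∑ x ∈ phiSnd S T, f x = ∑ x ∈ S, f x + ∑ x ∈ T, f x := by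
  rw [phiFst, phiSnd, sum_union (disjoint_symEven_symOdd S T),
    sum_union (disjoint_symEven_symOdd T S), ← sum_symEven_add_sum_symOdd S,
    ← sum_symEven_add_sum_symOdd T]
  abel

theorem card_phiFst_add_card_phiSnd : #(phiFst S T) + #(phiSnd S T) = #S + #T := by
  simpa only [card_eq_sum_ones] using sum_phiFst_add_sum_phiSnd S T (fun _ => 1)

end EvenOddParts

theorem symRank_phi (S T : Finset ℕ) : symRank (phiFst S T) (phiSnd S T) = symRank S T := by
  rw [symRank, symRank, sum_phiFst_add_sum_phiSnd, card_phiFst_add_card_phiSnd]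

theorem symRank_mod_two {S T : Finset ℕ} (h : Even (#S + #T)) :
    symRank S T % 2 = (#(symOdd S) + #(symOdd T)) % 2 := by
  have hsq := Nat.even_iff.mp (Nat.even_sub_one_div_two_mul_div_two h)
  rw [symRank, Nat.add_mod, Nat.add_mod (∑ x ∈ S, x), sum_mod_two_eq_card_symOdd_mod_two,
    sum_mod_two_eq_card_symOdd_mod_two, hsq]
  omega

/-- The involution `φ(Σ) = {S_e ∪ T_o, T_e ∪ S_o}` on Lusztig symbols is an involution
preserving the rank; the defects of `Σ` and `φ(Σ)` have the same parity, and when the defect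
is even, `defect(φ(Σ)) − defect(Σ)` is `0` or `2` mod `4` according to the parity of
`rank(Σ)`. -/
theorem phi_symbol_properties (S T : Finset ℕ) :
    (phiFst (phiFst S T) (phiSnd S T) = S ∧ phiSnd (phiFst S T) (phiSnd S T) = T) ∧
    symRank (phiFst S T) (phiSnd S T) = symRank S T ∧
    (Even (symDefect (phiFst S T) (phiSnd S T)) ↔ Even (symDefect S T)) ∧
    (Even (symDefect S T) →
      ((Even (symRank S T) →
          (symDefect (phiFst S T) (phiSnd S T) - symDefect S T) % 4 = 0) ∧
        (¬ Even (symRank S T) →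
          (symDefect (phiFst S T) (phiSnd S T) - symDefect S T) % 4 = 2))) := by
  have hS := card_symEven_add_card_symOdd S
  have hT := card_symEven_add_card_symOdd T
  have hφS := card_phiFst S T
  have hφT := card_phiSnd S T
  refine ⟨⟨phiFst_phiFst_phiSnd S T, phiSnd_phiFst_phiSnd S T⟩, symRank_phi S T, ?_, fun hdef => ?_⟩
  · simp only [symDefect, even_abs, Int.even_iff]
    omega
  · rw [symDefect, even_abs, Int.even_iff] at hdef
    have hrank := symRank_mod_two (S := S) (T := T) (Nat.even_iff.mpr (by omega))
    rw [symDefect, symDefect, Int.sub_emod,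
      Int.abs_emod_four_of_even (Int.even_iff.mpr (by omega)),
      Int.abs_emod_four_of_even (Int.even_iff.mpr hdef), ← Int.sub_emod, Nat.even_iff]
    omega
end

section
/- Let M be a finitely generated abelian group with an action of a group Γ, and let N ⊆ M be a finite Γ-stable subgroup with quotient Q = M/N. Then the exact sequence N → M → Q → 0 of Γ-coinvariants N_Γ → M_Γ → Q_Γ → 0 remains exact upon passing to p-torsion subgroups: the sequence (N_Γ)_{p-tors} → (M_Γ)_{p-tors} → (Q_Γ)_{p-tors} → 0 is exact. -/
/-- The augmentation subgroup: the quotient of `M` by it is the group `M_Γ` of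
`Γ`-coinvariants. -/
def coinvAug (Γ : Type*) [Group Γ] (M : Type*) [AddCommGroup M] [DistribMulAction Γ M] :
    AddSubgroup M :=
  AddSubgroup.closure {x | ∃ (γ : Γ) (m : M), x = γ • m - m}

/-!
A finite group `N` of order `p ^ a * b` with `p ∤ b` splits as `N[p ^ a] ⊕ N[b]`, and `p` acts
invertibly on `N[b]`. Lifting along `M → Q` identifies the augmentation subgroup of `Q` with the
image of that of `M`, so the obstructions met when lifting `p`-torsion classes lie in `f(N)`.
The `N[b]`-component of an obstruction can be absorbed: it is `p ^ n`-divisible, and an element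
lies in the augmentation subgroup as soon as both a `p`-power multiple and its `b`-multiple do.
The `N[p ^ a]`-component is itself `p`-power torsion.
-/

section Coprime

variable {G : Type*} [AddCommGroup G]

theorem AddSubgroup.mem_of_nsmul_mem_of_coprime (H : AddSubgroup G) {k l : ℕ}
    (hkl : k.Coprime l) {x : G} (hk : k • x ∈ H) (hl : l • x ∈ H) : x ∈ H := by
  obtain ⟨u, v, huv⟩ := Nat.isCoprime_iff_coprime.2 hkl
  have hx : x = u • k • x + v • l • x := by
    rw [← natCast_zsmul, ← natCast_zsmul, smul_smul, smul_smul, ← add_smul, huv, one_smul]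
  rw [hx]
  exact add_mem (zsmul_mem hk u) (zsmul_mem hl v)

theorem exists_nsmul_eq_of_coprime {k l : ℕ} (hkl : k.Coprime l) {x : G} (hx : l • x = 0) :
    ∃ y : G, k • y = x := by
  obtain ⟨u, v, huv⟩ := Nat.isCoprime_iff_coprime.2 hkl
  have hx' : (l : ℤ) • x = 0 := by rwa [natCast_zsmul]
  refine ⟨u • x, ?_⟩
  rw [← natCast_zsmul]
  linear_combination (norm := module) huv • x - v • hx'

theorem exists_add_eq_of_mul_nsmul_eq_zero {k l : ℕ} (hkl : k.Coprime l) {x : G}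
    (hx : (k * l) • x = 0) : ∃ y z : G, y + z = x ∧ k • y = 0 ∧ l • z = 0 := by
  obtain ⟨u, v, huv⟩ := Nat.isCoprime_iff_coprime.2 hkl
  refine ⟨(v * l) • x, (u * k) • x, ?_, ?_, ?_⟩
  · rw [← add_smul, add_comm, huv, one_smul]
  · rw [← natCast_zsmul, smul_smul, mul_left_comm, mul_smul, ← Nat.cast_mul, natCast_zsmul, hx,
      smul_zero]
  · rw [← natCast_zsmul, smul_smul, mul_left_comm, mul_smul, mul_comm (l : ℤ), ← Nat.cast_mul,
      natCast_zsmul, hx, smul_zero]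

theorem exists_pow_mul_coprime_nsmul_eq_zero [Finite G] {p : ℕ} (hp : p.Prime) :
    ∃ a b : ℕ, p.Coprime b ∧ ∀ x : G, (p ^ a * b) • x = 0 := by
  have hcard : Nat.card G ≠ 0 := Nat.card_pos.ne'
  refine ⟨(Nat.card G).factorization p, Nat.card G / p ^ (Nat.card G).factorization p,
    Nat.coprime_ordCompl hp hcard, fun x => ?_⟩
  rw [Nat.ordProj_mul_ordCompl_eq_self, card_nsmul_eq_zero']

end Coprime

section Coinvariants

variable (Γ : Type*) [Group Γ] {N M Q : Type*} [AddCommGroup N] [AddCommGroup M]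
  [AddCommGroup Q] [DistribMulAction Γ M] [DistribMulAction Γ Q]

theorem coinvAug_le_map (g : M →+ Q) (hgΓ : ∀ (γ : Γ) (x : M), g (γ • x) = γ • g x)
    (hgsurj : Function.Surjective g) : coinvAug Γ Q ≤ (coinvAug Γ M).map g := by
  refine (AddSubgroup.closure_le _).2 ?_
  rintro _ ⟨γ, q, rfl⟩
  obtain ⟨m, rfl⟩ := hgsurj q
  exact ⟨γ • m - m, AddSubgroup.subset_closure ⟨γ, m, rfl⟩, by simp [hgΓ]⟩

theorem exists_sub_mem_coinvAug_of_map_mem (f : N →+ M) (g : M →+ Q)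
    (hgΓ : ∀ (γ : Γ) (x : M), g (γ • x) = γ • g x) (hgsurj : Function.Surjective g)
    (hexact : f.range = g.ker) {m : M} (hm : g m ∈ coinvAug Γ Q) :
    ∃ x : N, m - f x ∈ coinvAug Γ M := by
  obtain ⟨a, ha, hga⟩ := coinvAug_le_map Γ g hgΓ hgsurj hm
  obtain ⟨x, hx⟩ : m - a ∈ f.range := by simp [hexact, hga]
  exact ⟨x, by rwa [hx, sub_sub_cancel]⟩

end Coinvariants

theorem coinvariants_pTorsion_exact_general (p : ℕ) (hp : p.Prime) (Γ : Type*) [Group Γ]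
    (N M Q : Type*) [AddCommGroup N] [AddCommGroup M] [AddCommGroup Q]
    [DistribMulAction Γ N] [DistribMulAction Γ M] [DistribMulAction Γ Q] [Finite N]
    (f : N →+ M) (g : M →+ Q)
    (hgΓ : ∀ (γ : Γ) (x : M), g (γ • x) = γ • g x)
    (hgsurj : Function.Surjective g)
    (hexact : f.range = g.ker) :
    -- surjectivity on p-torsion of coinvariants
    (∀ q : Q, (∃ n : ℕ, p ^ n • q ∈ coinvAug Γ Q) →
      ∃ m : M, (∃ n : ℕ, p ^ n • m ∈ coinvAug Γ M) ∧ g m - q ∈ coinvAug Γ Q) ∧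
    -- exactness in the middle on p-torsion of coinvariants
    (∀ m : M, (∃ n : ℕ, p ^ n • m ∈ coinvAug Γ M) → g m ∈ coinvAug Γ Q →
      ∃ x : N, (∃ n : ℕ, p ^ n • x ∈ coinvAug Γ N) ∧ m - f x ∈ coinvAug Γ M) := by
  obtain ⟨a, b, hpb, hN⟩ := exists_pow_mul_coprime_nsmul_eq_zero (G := N) hp
  constructor
  · rintro q ⟨n, hq⟩
    obtain ⟨m, rfl⟩ := hgsurj q
    obtain ⟨x, hx⟩ := exists_sub_mem_coinvAug_of_map_mem Γ f g hgΓ hgsurj hexact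
      (m := p ^ n • m) (by rwa [map_nsmul])
    obtain ⟨y, z, rfl, hy, hz⟩ := exists_add_eq_of_mul_nsmul_eq_zero (hpb.pow_left a) (hN x)
    obtain ⟨w, rfl⟩ := exists_nsmul_eq_of_coprime (hpb.pow_left n) hz
    have hgw : f w ∈ g.ker := hexact ▸ ⟨w, rfl⟩
    refine ⟨m - f w, ⟨a + n, ?_⟩, by rw [map_sub, hgw, sub_zero, sub_self]; exact zero_mem _⟩
    have h : p ^ n • (m - f w) = (p ^ n • m - f (y + p ^ n • w)) + f y := by
      rw [map_add, map_nsmul, smul_sub]; abel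
    rw [pow_add, mul_smul, h, smul_add, ← map_nsmul, hy, map_zero, add_zero]
    exact nsmul_mem hx _
  · rintro m ⟨n, hm⟩ hgm
    obtain ⟨x, hx⟩ := exists_sub_mem_coinvAug_of_map_mem Γ f g hgΓ hgsurj hexact hgm
    obtain ⟨y, z, rfl, hy, hz⟩ := exists_add_eq_of_mul_nsmul_eq_zero (hpb.pow_left a) (hN x)
    refine ⟨y, ⟨a, by rw [hy]; exact zero_mem _⟩, ?_⟩
    refine (coinvAug Γ M).mem_of_nsmul_mem_of_coprime (hpb.pow_left (n + a)) ?_ ?_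
    · rw [smul_sub, ← map_nsmul, pow_add, mul_smul, mul_smul, hy, smul_zero, map_zero, sub_zero,
        smul_comm]
      exact nsmul_mem hm _
    · have h : m - f y = (m - f (y + z)) + f z := by rw [map_add]; abel
      rw [h, smul_add, ← map_nsmul, hz, map_zero, add_zero]
      exact nsmul_mem hx _

/-- Let `Γ` act on a short exact sequence `0 → N → M → Q → 0` of abelian groups with `N`
finite. Then the right-exact sequence of coinvariants `N_Γ → M_Γ → Q_Γ → 0` remains exact
after passing to `p`-torsion subgroups: `(N_Γ)_{p-tors} → (M_Γ)_{p-tors} → (Q_Γ)_{p-tors} → 0`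
is exact.  (An element of a coinvariants group is represented by an element of the group,
its class is `p`-torsion iff some `p`-power multiple lies in the augmentation subgroup, and
it vanishes iff the representative lies in the augmentation subgroup.) -/
theorem coinvariants_pTorsion_exact (p : ℕ) (hp : p.Prime) (Γ : Type*) [Group Γ]
    (N M Q : Type*) [AddCommGroup N] [AddCommGroup M] [AddCommGroup Q]
    [DistribMulAction Γ N] [DistribMulAction Γ M] [DistribMulAction Γ Q] [Finite N]
    (f : N →+ M) (g : M →+ Q)
    (hfΓ : ∀ (γ : Γ) (x : N), f (γ • x) = γ • f x)
    (hgΓ : ∀ (γ : Γ) (x : M), g (γ • x) = γ • g x)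
    (hfinj : Function.Injective f) (hgsurj : Function.Surjective g)
    (hexact : f.range = g.ker) :
    -- surjectivity on p-torsion of coinvariants
    (∀ q : Q, (∃ n : ℕ, p ^ n • q ∈ coinvAug Γ Q) →
      ∃ m : M, (∃ n : ℕ, p ^ n • m ∈ coinvAug Γ M) ∧ g m - q ∈ coinvAug Γ Q) ∧
    -- exactness in the middle on p-torsion of coinvariants
    (∀ m : M, (∃ n : ℕ, p ^ n • m ∈ coinvAug Γ M) → g m ∈ coinvAug Γ Q →
      ∃ x : N, (∃ n : ℕ, p ^ n • x ∈ coinvAug Γ N) ∧ m - f x ∈ coinvAug Γ M) :=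
  coinvariants_pTorsion_exact_general p hp Γ N M Q f g hgΓ hgsurj hexact
end
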